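/- For OJZJ with 1 ≤ k ≤ n/2 and k ≥ 1, any maximal set of pairwise incomparable objective values has size at most n - 2k + 3; in particular the largest antichain in the image of (f1,f2) under the componentwise order has cardinality n - 2k + 3. -/
import Mathlib

def onesCount (n : ℕ) (x : Fin n → Bool) : ℕ :=
  (Finset.univ.filter fun i => x i = true).card

def f1 (n k : ℕ) (x : Fin n → Bool) : ℕ :=
  if onesCount n x ≤ n - k ∨ onesCount n x = n then k + onesCount n x else n - onesCount n x

def f2 (n k : ℕ) (x : Fin n → Bool) : ℕ :=
  if n - onesCount n x ≤ n - k ∨ onesCount n x = 0 then k + (n - onesCount n x)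
  else n - (n - onesCount n x)

lemma onesCount_le (n : ℕ) (x : Fin n → Bool) : onesCount n x ≤ n := by
  classical
  calc onesCount n x ≤ (Finset.univ : Finset (Fin n)).card := Finset.card_filter_le _ _
    _ = n := by simp

lemma exists_onesCount (n m : ℕ) (hm : m ≤ n) : ∃ x : Fin n → Bool, onesCount n x = m := by
  refine ⟨fun i => decide ((i : ℕ) < m), ?_⟩
  unfold onesCount
  have h : (Finset.univ.filter fun i : Fin n => (decide ((i:ℕ) < m)) = true)
      = (Finset.range m).attachFin (fun x hx => lt_of_lt_of_le (Finset.mem_range.mp hx) hm) := by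
    ext i; simp [Finset.mem_attachFin]
  rw [h, Finset.card_attachFin, Finset.card_range]

def Pset (n k : ℕ) : Finset (ℕ × ℕ) :=
  (Finset.Icc k (n - k)).image (fun m => (k + m, k + (n - m)))

def Tset (n k : ℕ) : Finset (ℕ × ℕ) :=
  insert (k, n + k) (insert (n + k, k) (Pset n k))

def Lset (k : ℕ) : Finset (ℕ × ℕ) := (Finset.Icc 1 (k - 1)).image (fun m => (k + m, m))

def Rset (k : ℕ) : Finset (ℕ × ℕ) := (Finset.Icc 1 (k - 1)).image (fun a => (a, a + k))

lemma mem_Tset_iff {n k : ℕ} {p : ℕ × ℕ} : p ∈ Tset n k ↔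
    p = (k, n + k) ∨ p = (n + k, k) ∨ ∃ m, k ≤ m ∧ m ≤ n - k ∧ p = (k + m, k + (n - m)) := by
  simp [Tset, Pset, Finset.mem_insert, Finset.mem_image, Finset.mem_Icc, eq_comm (a := p),
    and_assoc]

lemma mem_Lset_iff {k : ℕ} {p : ℕ × ℕ} : p ∈ Lset k ↔
    ∃ m, 1 ≤ m ∧ m ≤ k - 1 ∧ p = (k + m, m) := by
  simp [Lset, Finset.mem_image, Finset.mem_Icc, eq_comm (a := p), and_assoc]

lemma mem_Rset_iff {k : ℕ} {p : ℕ × ℕ} : p ∈ Rset k ↔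
    ∃ a, 1 ≤ a ∧ a ≤ k - 1 ∧ p = (a, a + k) := by
  simp [Rset, Finset.mem_image, Finset.mem_Icc, eq_comm (a := p), and_assoc]

lemma classify (n k : ℕ) (hk : 1 ≤ k) (hkn : 2 * k ≤ n) (x : Fin n → Bool) :
    (f1 n k x, f2 n k x) ∈ Tset n k ∨ (f1 n k x, f2 n k x) ∈ Lset k ∨
      (f1 n k x, f2 n k x) ∈ Rset k := by
  have hmn : onesCount n x ≤ n := onesCount_le n x
  set m := onesCount n x with hm
  have h1 : f1 n k x = if m ≤ n - k ∨ m = n then k + m else n - m := rfl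
  have h2 : f2 n k x = if n - m ≤ n - k ∨ m = 0 then k + (n - m) else n - (n - m) := rfl
  rcases Nat.lt_or_ge m k with hlt | hge
  · rcases Nat.eq_zero_or_pos m with h0 | h0
    · left
      rw [mem_Tset_iff]
      left
      rw [h1, h2, if_pos (by omega), if_pos (by omega)]
      simp [h0]; omega
    · right; left
      rw [mem_Lset_iff]
      refine ⟨m, by omega, by omega, ?_⟩
      rw [h1, h2, if_pos (by omega), if_neg (by omega)]
      simp; omega
  · rcases Nat.lt_or_ge (n - k) m with hgt | hle
    · rcases Nat.eq_or_lt_of_le hmn with h0 | h0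
      · left
        rw [mem_Tset_iff]
        right; left
        rw [h1, h2, if_pos (by omega), if_pos (by omega)]
        simp; omega
      · right; right
        rw [mem_Rset_iff]
        refine ⟨n - m, by omega, by omega, ?_⟩
        rw [h1, h2, if_neg (by omega), if_pos (by omega)]
        simp; omega
    · left
      rw [mem_Tset_iff]
      right; right
      refine ⟨m, hge, hle, ?_⟩
      rw [h1, h2, if_pos (by omega), if_pos (by omega)]

lemma card_Tset (n k : ℕ) (hk : 1 ≤ k) (hkn : 2 * k ≤ n) :
    (Tset n k).card = n - 2 * k + 3 := by
  have hP : (Pset n k).card = n - 2 * k + 1 := by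
    rw [Pset, Finset.card_image_of_injOn, Nat.card_Icc]
    · omega
    · intro a _ b _ hab
      simp only [Prod.mk.injEq] at hab
      omega
  have h1 : (n + k, k) ∉ Pset n k := by
    simp only [Pset, Finset.mem_image, Finset.mem_Icc, Prod.mk.injEq, not_exists]
    rintro a ⟨⟨h, h'⟩, h2, h3⟩
    omega
  have h2 : (k, n + k) ∉ insert (n + k, k) (Pset n k) := by
    simp only [Finset.mem_insert, Pset, Finset.mem_image, Finset.mem_Icc, Prod.mk.injEq]
    push_neg
    constructor
    · intro h; omega
    · rintro a ⟨h, h'⟩; intro h2; omega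
  rw [Tset, Finset.card_insert_of_notMem h2, Finset.card_insert_of_notMem h1, hP]

lemma Tset_antichain (n k : ℕ) (hk : 1 ≤ k) (hkn : 2 * k ≤ n) :
    ∀ p ∈ Tset n k, ∀ q ∈ Tset n k, p ≠ q →
      ¬(p.1 ≤ q.1 ∧ p.2 ≤ q.2) ∧ ¬(q.1 ≤ p.1 ∧ q.2 ≤ p.2) := by
  intro p hp q hq hne
  simp only [Tset, Pset, Finset.mem_insert, Finset.mem_image, Finset.mem_Icc] at hp hq
  rcases hp with hp | hp | ⟨a, ⟨ha1, ha2⟩, hp⟩ <;>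
    rcases hq with hq | hq | ⟨b, ⟨hb1, hb2⟩, hq⟩ <;>
      subst_vars <;> simp_all [Prod.ext_iff] <;> omega

lemma Tset_in_image (n k : ℕ) (hk : 1 ≤ k) (hkn : 2 * k ≤ n) :
    ∀ p ∈ Tset n k, ∃ x : Fin n → Bool, p = (f1 n k x, f2 n k x) := by
  intro p hp
  rw [mem_Tset_iff] at hp
  rcases hp with hp | hp | ⟨m, hm1, hm2, hp⟩
  · obtain ⟨x, hx⟩ := exists_onesCount n 0 (by omega)
    refine ⟨x, ?_⟩
    rw [hp, f1, f2, hx, if_pos (by omega), if_pos (by omega)]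
    simp; omega
  · obtain ⟨x, hx⟩ := exists_onesCount n n le_rfl
    refine ⟨x, ?_⟩
    rw [hp, f1, f2, hx, if_pos (by omega), if_pos (by omega)]
    simp; omega
  · obtain ⟨x, hx⟩ := exists_onesCount n m (by omega)
    refine ⟨x, ?_⟩
    rw [hp, f1, f2, hx, if_pos (by omega), if_pos (by omega)]

theorem stmt15 (n k : ℕ) (hk : 1 ≤ k) (hkn : 2 * k ≤ n) :
    (∀ S : Finset (ℕ × ℕ),
      (∀ p ∈ S, ∃ x : Fin n → Bool, p = (f1 n k x, f2 n k x)) →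
      (∀ p ∈ S, ∀ q ∈ S, p ≠ q →
        ¬(p.1 ≤ q.1 ∧ p.2 ≤ q.2) ∧ ¬(q.1 ≤ p.1 ∧ q.2 ≤ p.2)) →
      S.card ≤ n - 2 * k + 3) ∧
    (∃ S : Finset (ℕ × ℕ),
      (∀ p ∈ S, ∃ x : Fin n → Bool, p = (f1 n k x, f2 n k x)) ∧
      (∀ p ∈ S, ∀ q ∈ S, p ≠ q →
        ¬(p.1 ≤ q.1 ∧ p.2 ≤ q.2) ∧ ¬(q.1 ≤ p.1 ∧ q.2 ≤ p.2)) ∧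
      S.card = n - 2 * k + 3) := by
  classical
  constructor
  · intro S hS hanti
    -- every element of S is in Tset ∪ Lset ∪ Rset
    have hclass : ∀ p ∈ S, p ∈ Tset n k ∨ p ∈ Lset k ∨ p ∈ Rset k := by
      intro p hp
      obtain ⟨x, hx⟩ := hS p hp
      rw [hx]
      exact classify n k hk hkn x
    by_cases hT : ∀ p ∈ S, p ∈ Tset n k
    · have hsub : S ⊆ Tset n k := hT
      calc S.card ≤ (Tset n k).card := Finset.card_le_card hsub
        _ = n - 2 * k + 3 := card_Tset n k hk hkn
    · push_neg at hT
      obtain ⟨p₀, hp₀S, hp₀T⟩ := hT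
      have hp₀LR : p₀ ∈ Lset k ∨ p₀ ∈ Rset k := by
        rcases hclass p₀ hp₀S with h | h | h
        · exact absurd h hp₀T
        · exact Or.inl h
        · exact Or.inr h
      have h3 : (3 : ℕ) ≤ n - 2 * k + 3 := by omega
      rcases hp₀LR with hL | hR
      · -- p₀ is an L point
        rw [mem_Lset_iff] at hL
        obtain ⟨m₀, hm₀1, hm₀2, hp₀e⟩ := hL
        have hsub : S ⊆ insert p₀ (insert (k, n + k) (S.filter (· ∈ Rset k))) := by
          intro q hq
          simp only [Finset.mem_insert, Finset.mem_filter]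
          rcases hclass q hq with hqT | hqL | hqR
          · rw [mem_Tset_iff] at hqT
            rcases hqT with hqe | hqe | ⟨m, hm1, hm2, hqe⟩
            · exact Or.inr (Or.inl hqe)
            · -- q = (n+k, k) dominates p₀: contradiction
              exfalso
              have hne : p₀ ≠ q := by rw [hp₀e, hqe]; simp [Prod.ext_iff]; omega
              exact (hanti p₀ hp₀S q hq hne).1 (by rw [hp₀e, hqe]; constructor <;> simp <;> omega)
            · exfalso
              have hne : p₀ ≠ q := by rw [hp₀e, hqe]; simp [Prod.ext_iff]; omega
              exact (hanti p₀ hp₀S q hq hne).1 (by rw [hp₀e, hqe]; constructor <;> simp <;> omega)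
          · -- q in Lset: q = p₀
            rw [mem_Lset_iff] at hqL
            obtain ⟨m, hm1, hm2, hqe⟩ := hqL
            left
            by_contra hne
            rcases Nat.lt_or_ge m m₀ with hlt | hge
            · exact (hanti p₀ hp₀S q hq (fun h => hne h.symm)).2
                (by rw [hp₀e, hqe]; constructor <;> simp <;> omega)
            · exact (hanti p₀ hp₀S q hq (fun h => hne h.symm)).1
                (by rw [hp₀e, hqe]; constructor <;> simp <;> omega)
          · exact Or.inr (Or.inr ⟨hq, hqR⟩)
        have hfil : (S.filter (· ∈ Rset k)).card ≤ 1 := by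
          rw [Finset.card_le_one]
          intro a ha b hb
          simp only [Finset.mem_filter] at ha hb
          obtain ⟨haS, haR⟩ := ha
          obtain ⟨hbS, hbR⟩ := hb
          rw [mem_Rset_iff] at haR hbR
          obtain ⟨a₁, ha1, ha2, hae⟩ := haR
          obtain ⟨b₁, hb1, hb2, hbe⟩ := hbR
          by_contra hne
          rcases Nat.lt_or_ge a₁ b₁ with hlt | hge
          · exact (hanti a haS b hbS hne).1 (by rw [hae, hbe]; constructor <;> simp <;> omega)
          · exact (hanti a haS b hbS hne).2 (by rw [hae, hbe]; constructor <;> simp <;> omega)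
        calc S.card ≤ (insert p₀ (insert (k, n + k) (S.filter (· ∈ Rset k)))).card :=
              Finset.card_le_card hsub
          _ ≤ (insert (k, n + k) (S.filter (· ∈ Rset k))).card + 1 :=
              Finset.card_insert_le _ _
          _ ≤ (S.filter (· ∈ Rset k)).card + 1 + 1 := by
              have := Finset.card_insert_le (k, n + k) (S.filter (· ∈ Rset k))
              omega
          _ ≤ n - 2 * k + 3 := by omega
      · -- p₀ is an R point
        rw [mem_Rset_iff] at hR
        obtain ⟨a₀, ha₀1, ha₀2, hp₀e⟩ := hR
        have hsub : S ⊆ insert p₀ (insert (n + k, k) (S.filter (· ∈ Lset k))) := by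
          intro q hq
          simp only [Finset.mem_insert, Finset.mem_filter]
          rcases hclass q hq with hqT | hqL | hqR
          · rw [mem_Tset_iff] at hqT
            rcases hqT with hqe | hqe | ⟨m, hm1, hm2, hqe⟩
            · exfalso
              have hne : p₀ ≠ q := by rw [hp₀e, hqe]; simp [Prod.ext_iff]; omega
              exact (hanti p₀ hp₀S q hq hne).1 (by rw [hp₀e, hqe]; constructor <;> simp <;> omega)
            · exact Or.inr (Or.inl hqe)
            · exfalso
              have hne : p₀ ≠ q := by rw [hp₀e, hqe]; simp [Prod.ext_iff]; omega
              exact (hanti p₀ hp₀S q hq hne).1 (by rw [hp₀e, hqe]; constructor <;> simp <;> omega)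
          · exact Or.inr (Or.inr ⟨hq, hqL⟩)
          · rw [mem_Rset_iff] at hqR
            obtain ⟨a, ha1, ha2, hqe⟩ := hqR
            left
            by_contra hne
            rcases Nat.lt_or_ge a a₀ with hlt | hge
            · exact (hanti p₀ hp₀S q hq (fun h => hne h.symm)).2
                (by rw [hp₀e, hqe]; constructor <;> simp <;> omega)
            · exact (hanti p₀ hp₀S q hq (fun h => hne h.symm)).1
                (by rw [hp₀e, hqe]; constructor <;> simp <;> omega)
        have hfil : (S.filter (· ∈ Lset k)).card ≤ 1 := by
          rw [Finset.card_le_one]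
          intro a ha b hb
          simp only [Finset.mem_filter] at ha hb
          obtain ⟨haS, haL⟩ := ha
          obtain ⟨hbS, hbL⟩ := hb
          rw [mem_Lset_iff] at haL hbL
          obtain ⟨a₁, ha1, ha2, hae⟩ := haL
          obtain ⟨b₁, hb1, hb2, hbe⟩ := hbL
          by_contra hne
          rcases Nat.lt_or_ge a₁ b₁ with hlt | hge
          · exact (hanti a haS b hbS hne).1 (by rw [hae, hbe]; constructor <;> simp <;> omega)
          · exact (hanti a haS b hbS hne).2 (by rw [hae, hbe]; constructor <;> simp <;> omega)
        calc S.card ≤ (insert p₀ (insert (n + k, k) (S.filter (· ∈ Lset k)))).card :=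
              Finset.card_le_card hsub
          _ ≤ (insert (n + k, k) (S.filter (· ∈ Lset k))).card + 1 :=
              Finset.card_insert_le _ _
          _ ≤ (S.filter (· ∈ Lset k)).card + 1 + 1 := by
              have := Finset.card_insert_le (n + k, k) (S.filter (· ∈ Lset k))
              omega
          _ ≤ n - 2 * k + 3 := by omega
  · exact ⟨Tset n k, Tset_in_image n k hk hkn, Tset_antichain n k hk hkn,
      card_Tset n k hk hkn⟩
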